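/- Let B be a bialgebra over a field k, let n be a finite index type, and let ρ : B → Matrix n n k be a k-linear map with ρ(1) = 1 and ρ(ab) = ρ(b)·ρ(a) for all a, b ∈ B (a right matrix representation), and R an n × n matrix with entries in B satisfying Δ(Rⁱₖ) = Σ_m Rⁱₘ ⊗ Rᵐₖ and ε(Rⁱₖ) = δⁱₖ. Assume the right-right Yetter–Drinfeld condition: for all a ∈ B and all i, k, Σ_m a₍₁₎ · Rᵏₘ · ρᵐᵢ(a₍₂₎) = Σ_m Rᵐᵢ · a₍₂₎ · ρᵏₘ(a₍₁₎). Let V = kⁿ with standard basis (e_i), and define the k-linear operator c on V ⊗ V by c(e_i ⊗ e_k) := Σ_{m,j} ρʲᵢ(Rᵐₖ) · e_m ⊗ e_j. Then c satisfies the braid (quantum Yang–Baxter) equation on V ⊗ V ⊗ V: (c ⊗ id) ∘ (id ⊗ c) ∘ (c ⊗ id) = (id ⊗ c) ∘ (c ⊗ id) ∘ (id ⊗ c). -/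

import Mathlib

/-!
Write `c(e_i ⊗ e_j) = Σ_{m,r} C^{mr}_{ij} e_m ⊗ e_r` with `C^{mr}_{ij} = ρʳᵢ(Rᵐⱼ)`. The braid
equation is then an identity of triple sums of products of three coefficients. On each side
one summation contracts two `ρ`-factors, and since `ρ` is anti-multiplicative it becomes
`ρᵈᵢ` of a product of two entries of `R`. What remains on the two sides is `ρᵈᵢ` applied to
the two sides of the Yetter–Drinfeld condition for `a = Rᵃₗ`, whose coproduct is
`Σ_p Rᵃ_p ⊗ Rᵖₗ`.
-/

open TensorProduct

theorem Module.Basis.constr_tensorProduct_tmul {k ι κ M N P : Type*} [CommSemiring k]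
    [AddCommMonoid M] [AddCommMonoid N] [AddCommMonoid P] [Module k M] [Module k N] [Module k P]
    (b : Basis ι k M) (b' : Basis κ k N) (f : ι × κ → P) (i : ι) (j : κ) :
    (b.tensorProduct b').constr k f (b i ⊗ₜ b' j) = f (i, j) := by
  rw [← Basis.tensorProduct_apply, Basis.constr_basis]

theorem Matrix.sum_apply_mul_apply_of_antimul {k B : Type*} [CommSemiring k] [Mul B]
    {n : Type*} [Fintype n] (rho : B → Matrix n n k)
    (hrhom : ∀ a b : B, rho (a * b) = rho b * rho a) (x y : B) (i j : n) :
    ∑ r, rho x r i * rho y j r = rho (x * y) j i := by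
  simp only [hrhom, Matrix.mul_apply, mul_comm]

theorem braid_of_coeff {k : Type*} [CommSemiring k] {n : Type*} [Fintype n]
    (C : n → n → n → n → k) (c : (n → k) ⊗[k] (n → k) →ₗ[k] (n → k) ⊗[k] (n → k))
    (hc : ∀ i j, c (Pi.basisFun k n i ⊗ₜ Pi.basisFun k n j) =
      ∑ m, ∑ r, C i j m r • (Pi.basisFun k n m ⊗ₜ Pi.basisFun k n r))
    (hC : ∀ i j l a b d, ∑ m, ∑ p, ∑ r, C i j m r * C r l p d * C m p a b =
      ∑ m, ∑ r, ∑ s, C j l m r * C i m a s * C s r b d) :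
    LinearMap.rTensor (n → k) c ∘ₗ
      ((TensorProduct.assoc k (n → k) (n → k) (n → k)).symm.toLinearMap ∘ₗ
        LinearMap.lTensor (n → k) c ∘ₗ
        (TensorProduct.assoc k (n → k) (n → k) (n → k)).toLinearMap) ∘ₗ
      LinearMap.rTensor (n → k) c =
    ((TensorProduct.assoc k (n → k) (n → k) (n → k)).symm.toLinearMap ∘ₗ
        LinearMap.lTensor (n → k) c ∘ₗ
        (TensorProduct.assoc k (n → k) (n → k) (n → k)).toLinearMap) ∘ₗ
      LinearMap.rTensor (n → k) c ∘ₗ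
      ((TensorProduct.assoc k (n → k) (n → k) (n → k)).symm.toLinearMap ∘ₗ
        LinearMap.lTensor (n → k) c ∘ₗ
        (TensorProduct.assoc k (n → k) (n → k) (n → k)).toLinearMap) := by
  classical
  set e := Pi.basisFun k n
  refine ((e.tensorProduct e).tensorProduct e).ext fun ⟨⟨i, j⟩, l⟩ => ?_
  simp only [Module.Basis.tensorProduct_apply', LinearMap.comp_apply, LinearEquiv.coe_coe,
    LinearMap.rTensor_tmul, LinearMap.lTensor_tmul, TensorProduct.assoc_tmul,
    TensorProduct.assoc_symm_tmul, hc, map_sum, map_smul, sum_tmul, tmul_sum,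
    smul_tmul, tmul_smul, smul_smul, Finset.smul_sum]
  refine ((e.tensorProduct e).tensorProduct e).repr.injective (Finsupp.ext fun ⟨⟨a, b⟩, d⟩ => ?_)
  simp only [map_sum, map_smul, Finsupp.finsetSum_apply, Finsupp.smul_apply,
    Module.Basis.tensorProduct_repr_tmul_apply, Module.Basis.repr_self, Finsupp.single_apply,
    smul_eq_mul, mul_ite, mul_one, mul_zero]
  simp only [Finset.sum_ite_irrel, Finset.sum_ite_eq', Finset.mem_univ, if_true,
    Finset.sum_const_zero]
  rw [Finset.sum_congr rfl fun m _ => Finset.sum_comm]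
  exact hC i j l a b d

section YetterDrinfeld

variable {k B : Type*} [CommSemiring k] [Semiring B] [Bialgebra k B] {n : Type*} [Fintype n]

def IsRightRightYetterDrinfeld (rho : B →ₗ[k] Matrix n n k) (R : Matrix n n B) : Prop :=
  ∀ (a : B) (ι : Type) (s : Finset ι) (a1 a2 : ι → B),
    Coalgebra.comul (R := k) a = ∑ u ∈ s, a1 u ⊗ₜ[k] a2 u →
    ∀ i j, ∑ u ∈ s, ∑ m, rho (a2 u) m i • (a1 u * R j m) =
      ∑ u ∈ s, ∑ m, rho (a1 u) j m • (R m i * a2 u)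

variable {rho : B →ₗ[k] Matrix n n k} {R : Matrix n n B}

theorem IsRightRightYetterDrinfeld.sum_univ (hYD : IsRightRightYetterDrinfeld rho R)
    {ι : Type*} [Fintype ι] (a : B) (a1 a2 : ι → B)
    (ha : Coalgebra.comul (R := k) a = ∑ u, a1 u ⊗ₜ[k] a2 u) (i j : n) :
    ∑ u, ∑ m, rho (a2 u) m i • (a1 u * R j m) = ∑ u, ∑ m, rho (a1 u) j m • (R m i * a2 u) := by
  let e := (Fintype.equivFin ι).symm
  simp only [← e.sum_comp] at ha ⊢
  exact hYD a _ Finset.univ (a1 ∘ e) (a2 ∘ e) ha i j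

theorem IsRightRightYetterDrinfeld.apply_entry (hYD : IsRightRightYetterDrinfeld rho R)
    (hΔR : ∀ i j, Coalgebra.comul (R := k) (R i j) = ∑ m, R i m ⊗ₜ[k] R m j) (a l i j : n) :
    ∑ p, ∑ m, rho (R p l) m i • (R a p * R j m) = ∑ p, ∑ m, rho (R a p) j m • (R m i * R p l) :=
  hYD.sum_univ (R a l) (R a) (R · l) (hΔR a l) i j

end YetterDrinfeld

theorem stmt11_general {k B : Type*} [Field k] [Ring B] [Bialgebra k B]
    {n : Type*} [Fintype n]
    (rho : B →ₗ[k] Matrix n n k)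
    (hrhom : ∀ a b : B, rho (a * b) = rho b * rho a)
    (R : Matrix n n B)
    (hΔR : ∀ i j, Coalgebra.comul (R := k) (R i j) = ∑ m, R i m ⊗ₜ[k] R m j)
    (hYD : ∀ (a : B) (ι : Type) (s : Finset ι) (a1 a2 : ι → B),
      Coalgebra.comul (R := k) a = ∑ u ∈ s, a1 u ⊗ₜ[k] a2 u →
      ∀ i j, ∑ u ∈ s, ∑ m, rho (a2 u) m i • (a1 u * R j m) =
             ∑ u ∈ s, ∑ m, rho (a1 u) j m • (R m i * a2 u))
    (c : (n → k) ⊗[k] (n → k) →ₗ[k] (n → k) ⊗[k] (n → k))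
    (hc : c = ((Pi.basisFun k n).tensorProduct (Pi.basisFun k n)).constr k
      fun p => ∑ m, ∑ j, rho (R m p.2) j p.1 • (Pi.basisFun k n m ⊗ₜ[k] Pi.basisFun k n j)) :
    LinearMap.rTensor (n → k) c ∘ₗ
      ((TensorProduct.assoc k (n → k) (n → k) (n → k)).symm.toLinearMap ∘ₗ
        LinearMap.lTensor (n → k) c ∘ₗ
        (TensorProduct.assoc k (n → k) (n → k) (n → k)).toLinearMap) ∘ₗ
      LinearMap.rTensor (n → k) c =
    ((TensorProduct.assoc k (n → k) (n → k) (n → k)).symm.toLinearMap ∘ₗ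
        LinearMap.lTensor (n → k) c ∘ₗ
        (TensorProduct.assoc k (n → k) (n → k) (n → k)).toLinearMap) ∘ₗ
      LinearMap.rTensor (n → k) c ∘ₗ
      ((TensorProduct.assoc k (n → k) (n → k) (n → k)).symm.toLinearMap ∘ₗ
        LinearMap.lTensor (n → k) c ∘ₗ
        (TensorProduct.assoc k (n → k) (n → k) (n → k)).toLinearMap) := by
  refine braid_of_coeff (fun i j m r => rho (R m j) r i) c
    (fun i j => by rw [hc, Module.Basis.constr_tensorProduct_tmul]) fun i j l a b d => ?_
  have contract := Matrix.sum_apply_mul_apply_of_antimul rho hrhom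
  have yd := congrArg (rho · d i)
    (IsRightRightYetterDrinfeld.apply_entry (rho := rho) hYD hΔR a l j b)
  simp only [map_sum, map_smul, Matrix.sum_apply, Matrix.smul_apply, smul_eq_mul] at yd
  simp only [← Finset.sum_mul, contract]
  simp only [mul_assoc, ← Finset.mul_sum, contract]
  rw [yd, Finset.sum_comm]
  exact Finset.sum_congr rfl fun _ _ => Finset.sum_congr rfl fun _ _ => mul_comm _ _

/-- Let `B` be a bialgebra over a field `k`, `ρ : B → Matrix n n k` a
`k`-linear map with `ρ(1) = 1` and `ρ(ab) = ρ(b)ρ(a)`, and `R` a matrix over `B` with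
`Δ(Rⁱₖ) = Σ_m Rⁱₘ ⊗ Rᵐₖ`, `ε(Rⁱₖ) = δⁱₖ`, satisfying the right-right Yetter–Drinfeld
condition `Σ_m a₍₁₎ Rᵏₘ ρᵐᵢ(a₍₂₎) = Σ_m Rᵐᵢ a₍₂₎ ρᵏₘ(a₍₁₎)`. Then the operator `c` on
`kⁿ ⊗ kⁿ` defined by `c(e_i ⊗ e_k) = Σ_{m,j} ρʲᵢ(Rᵐₖ) e_m ⊗ e_j` satisfies the braid
(quantum Yang–Baxter) equation. -/
theorem stmt11 {k B : Type*} [Field k] [Ring B] [Bialgebra k B]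
    {n : Type*} [Fintype n] [DecidableEq n]
    (rho : B →ₗ[k] Matrix n n k) (hrho1 : rho 1 = 1)
    (hrhom : ∀ a b : B, rho (a * b) = rho b * rho a)
    (R : Matrix n n B)
    (hΔR : ∀ i j, Coalgebra.comul (R := k) (R i j) = ∑ m, R i m ⊗ₜ[k] R m j)
    (hεR : ∀ i j, Coalgebra.counit (R := k) (R i j) = if i = j then (1 : k) else 0)
    (hYD : ∀ (a : B) (ι : Type) (s : Finset ι) (a1 a2 : ι → B),
      Coalgebra.comul (R := k) a = ∑ u ∈ s, a1 u ⊗ₜ[k] a2 u →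
      ∀ i j, ∑ u ∈ s, ∑ m, rho (a2 u) m i • (a1 u * R j m) =
             ∑ u ∈ s, ∑ m, rho (a1 u) j m • (R m i * a2 u))
    (c : (n → k) ⊗[k] (n → k) →ₗ[k] (n → k) ⊗[k] (n → k))
    (hc : c = ((Pi.basisFun k n).tensorProduct (Pi.basisFun k n)).constr k
      fun p => ∑ m, ∑ j, rho (R m p.2) j p.1 • (Pi.basisFun k n m ⊗ₜ[k] Pi.basisFun k n j)) :
    LinearMap.rTensor (n → k) c ∘ₗ
      ((TensorProduct.assoc k (n → k) (n → k) (n → k)).symm.toLinearMap ∘ₗ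
        LinearMap.lTensor (n → k) c ∘ₗ
        (TensorProduct.assoc k (n → k) (n → k) (n → k)).toLinearMap) ∘ₗ
      LinearMap.rTensor (n → k) c =
    ((TensorProduct.assoc k (n → k) (n → k) (n → k)).symm.toLinearMap ∘ₗ
        LinearMap.lTensor (n → k) c ∘ₗ
        (TensorProduct.assoc k (n → k) (n → k) (n → k)).toLinearMap) ∘ₗ
      LinearMap.rTensor (n → k) c ∘ₗ
      ((TensorProduct.assoc k (n → k) (n → k) (n → k)).symm.toLinearMap ∘ₗ
        LinearMap.lTensor (n → k) c ∘ₗ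
        (TensorProduct.assoc k (n → k) (n → k) (n → k)).toLinearMap) :=
  stmt11_general rho hrhom R hΔR hYD c hc
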